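/- For η ∈ (√2 - 1, ∞) and σ > 0, the function f(t) = √(t² + (1/2 - t)²) + η(1/2 - t)²/√(t² + (1/2 - t)²) + √2 t on [0, 1/2) attains its infimum at some interior point t* ∈ (0, 1/2), i.e., f(t*) < f(0) = (1+η)/2 for some t* > 0. -/
import Mathlib

/-- Normalized cell energy of the offset dislocation microstructure (`σ = 1`). -/
noncomputable def fcell (η t : ℝ) : ℝ :=
  Real.sqrt (t ^ 2 + (1 / 2 - t) ^ 2)
    + η * (1 / 2 - t) ^ 2 / Real.sqrt (t ^ 2 + (1 / 2 - t) ^ 2)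
    + Real.sqrt 2 * t

lemma sqrt_aux_le (a b : ℝ) (ha : 0 < a) : Real.sqrt (a^2 + b^2) ≤ a + b^2/(2*a) := by
  have h1 : a^2 + b^2 ≤ (a + b^2/(2*a))^2 := by
    have h2 : (a + b^2/(2*a))^2 = a^2 + b^2 + (b^2/(2*a))^2 := by
      field_simp; ring
    nlinarith [sq_nonneg (b^2/(2*a))]
  calc Real.sqrt (a^2+b^2) ≤ Real.sqrt ((a + b^2/(2*a))^2) := Real.sqrt_le_sqrt h1
    _ = a + b^2/(2*a) := Real.sqrt_sq (by positivity)

lemma sqrt_aux_ge (a b : ℝ) (ha : 0 ≤ a) : a ≤ Real.sqrt (a^2 + b^2) := by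
  calc a = Real.sqrt (a^2) := (Real.sqrt_sq ha).symm
    _ ≤ _ := Real.sqrt_le_sqrt (by nlinarith [sq_nonneg b])

lemma Qpos (t : ℝ) : 0 < t ^ 2 + (1 / 2 - t) ^ 2 := by
  nlinarith [sq_nonneg (t - 1/4)]

lemma fcell_cont (η : ℝ) : Continuous (fcell η) := by
  have h : ∀ t : ℝ, Real.sqrt (t ^ 2 + (1 / 2 - t) ^ 2) ≠ 0 := fun t =>
    (Real.sqrt_pos.mpr (Qpos t)).ne'
  unfold fcell
  apply Continuous.add
  apply Continuous.add
  · exact (by fun_prop : Continuous fun t : ℝ => (t ^ 2 + (1 / 2 - t) ^ 2)).sqrt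
  · exact Continuous.div (by fun_prop)
      ((by fun_prop : Continuous fun t : ℝ => (t ^ 2 + (1 / 2 - t) ^ 2)).sqrt) h
  · fun_prop

/-- upper bound useful near `t = 0` -/
lemma fcell_le_A (η t : ℝ) (hη : 0 ≤ η) (ht : 0 ≤ t) (ht2 : t < 1/2) :
    fcell η t ≤ (1/2 - t) + t^2/(2*(1/2 - t)) + η * (1/2 - t) + Real.sqrt 2 * t := by
  set u : ℝ := 1/2 - t with hu
  have hupos : 0 < u := by simp [hu]; linarith
  have hQ : t ^ 2 + u ^ 2 = u ^ 2 + t ^ 2 := by ring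
  have hr_le : Real.sqrt (t ^ 2 + u ^ 2) ≤ u + t^2/(2*u) := by
    rw [hQ]; exact sqrt_aux_le u t hupos
  have hr_ge : u ≤ Real.sqrt (t ^ 2 + u ^ 2) := by
    rw [hQ]; exact sqrt_aux_ge u t hupos.le
  have hrpos : 0 < Real.sqrt (t ^ 2 + u ^ 2) := lt_of_lt_of_le hupos hr_ge
  have hdiv : η * u ^ 2 / Real.sqrt (t ^ 2 + u ^ 2) ≤ η * u := by
    rw [div_le_iff₀ hrpos]
    nlinarith [mul_nonneg (mul_nonneg hη hupos.le) (sub_nonneg.mpr hr_ge)]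
  unfold fcell
  have e : (1:ℝ)/2 - t = u := rfl
  rw [e]
  linarith [hr_le, hdiv]

/-- upper bound useful near `t = 1/2` -/
lemma fcell_le_B (η t : ℝ) (hη : 0 ≤ η) (ht : 0 < t) (ht2 : t < 1/2) :
    fcell η t ≤ t + (1/2 - t)^2/(2*t) + η * (1/2 - t)^2 / t + Real.sqrt 2 * t := by
  set u : ℝ := 1/2 - t with hu
  have hupos : 0 < u := by simp [hu]; linarith
  have hr_le : Real.sqrt (t ^ 2 + u ^ 2) ≤ t + u^2/(2*t) := sqrt_aux_le t u ht
  have hr_ge : t ≤ Real.sqrt (t ^ 2 + u ^ 2) := sqrt_aux_ge t u ht.le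
  have hrpos : 0 < Real.sqrt (t ^ 2 + u ^ 2) := lt_of_lt_of_le ht hr_ge
  have hdiv : η * u ^ 2 / Real.sqrt (t ^ 2 + u ^ 2) ≤ η * u ^ 2 / t := by
    rw [div_le_div_iff₀ hrpos ht]
    nlinarith [mul_nonneg (mul_nonneg hη (sq_nonneg u)) (sub_nonneg.mpr hr_ge)]
  unfold fcell
  have e : (1:ℝ)/2 - t = u := rfl
  rw [e]
  linarith [hr_le, hdiv]

lemma fcell_zero (η : ℝ) : fcell η 0 = (1 + η) / 2 := by
  have h : (0:ℝ) ^ 2 + (1 / 2 - 0) ^ 2 = (1/2)^2 := by norm_num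
  unfold fcell
  rw [h, Real.sqrt_sq (by norm_num : (0:ℝ) ≤ 1/2)]
  ring

lemma fcell_half (η : ℝ) : fcell η (1/2) = 1/2 + Real.sqrt 2 / 2 := by
  have h : ((1:ℝ)/2) ^ 2 + (1 / 2 - 1/2) ^ 2 = (1/2)^2 := by norm_num
  unfold fcell
  rw [h, Real.sqrt_sq (by norm_num : (0:ℝ) ≤ 1/2)]
  ring

set_option maxHeartbeats 1000000 in
theorem stmt18 (η : ℝ) (hη : Real.sqrt 2 - 1 < η) :
    fcell η 0 = (1 + η) / 2 ∧
    ∃ t ∈ Set.Ioo (0 : ℝ) (1 / 2),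
      (∀ s ∈ Set.Ico (0 : ℝ) (1 / 2), fcell η t ≤ fcell η s) ∧
      fcell η t < fcell η 0 := by
  have hs2 : (1:ℝ) < Real.sqrt 2 := by
    nlinarith [Real.sq_sqrt (by norm_num : (2:ℝ) ≥ 0), Real.sqrt_nonneg 2]
  have hηpos : 0 < η := by linarith
  refine ⟨fcell_zero η, ?_⟩
  -- witness near 0
  obtain ⟨δ, hδ, hδpos⟩ : ∃ δ : ℝ, δ = η + 1 - Real.sqrt 2 ∧ 0 < δ :=
    ⟨η + 1 - Real.sqrt 2, rfl, by linarith⟩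
  obtain ⟨t₁, ht₁pos, ht₁le, ht₁leδ⟩ :
      ∃ t₁ : ℝ, 0 < t₁ ∧ t₁ ≤ 1/4 ∧ t₁ ≤ δ/4 :=
    ⟨min (1/4) (δ/4), lt_min (by norm_num) (by linarith),
      min_le_left _ _, min_le_right _ _⟩
  have hw1 : fcell η t₁ < fcell η 0 := by
    have hA := fcell_le_A η t₁ hηpos.le ht₁pos.le (by linarith)
    have hu : (1:ℝ)/4 ≤ 1/2 - t₁ := by linarith
    have hfrac : t₁^2/(2*(1/2 - t₁)) ≤ 2*t₁^2 := by
      rw [div_le_iff₀ (by linarith)]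
      nlinarith [mul_nonneg (sq_nonneg t₁) (by linarith : (0:ℝ) ≤ 4*(1/2-t₁) - 1)]
    rw [fcell_zero]
    have : (1/2 - t₁) + t₁^2/(2*(1/2 - t₁)) + η * (1/2 - t₁) + Real.sqrt 2 * t₁
        < (1 + η)/2 := by
      have hkey : 2*t₁^2 ≤ δ * t₁ / 2 := by nlinarith
      have hδt : Real.sqrt 2 * t₁ = (η + 1 - δ) * t₁ := by rw [hδ]; ring
      rw [hδt]
      nlinarith [ht₁pos, hδpos]
    linarith
  -- witness near 1/2
  have h24 : (0:ℝ) < 2 + 4*η := by linarith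
  obtain ⟨ε, hεpos, hεle, hεle2⟩ :
      ∃ ε : ℝ, 0 < ε ∧ ε ≤ 1/4 ∧ ε ≤ 1/(2+4*η) :=
    ⟨min (1/4) (1/(2+4*η)), lt_min (by norm_num) (by positivity),
      min_le_left _ _, min_le_right _ _⟩
  obtain ⟨t₂, ht₂def⟩ : ∃ t₂ : ℝ, t₂ = 1/2 - ε := ⟨_, rfl⟩
  have ht₂pos : 0 < t₂ := by rw [ht₂def]; linarith
  have ht₂lt : t₂ < 1/2 := by rw [ht₂def]; linarith
  have ht₂ge : (1:ℝ)/4 ≤ t₂ := by rw [ht₂def]; linarith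
  have hw2 : fcell η t₂ < fcell η (1/2) := by
    have hB := fcell_le_B η t₂ hηpos.le ht₂pos (by linarith)
    have hu : (1:ℝ)/2 - t₂ = ε := by rw [ht₂def]; ring
    rw [hu] at hB
    have hfrac1 : ε^2/(2*t₂) ≤ 2*ε^2 := by
      rw [div_le_iff₀ (by linarith)]
      nlinarith [mul_nonneg (sq_nonneg ε) (by linarith [ht₂ge, hεle] : (0:ℝ) ≤ 4*t₂ - 1)]
    have hfrac2 : η * ε^2 / t₂ ≤ 4*η*ε^2 := by
      rw [div_le_iff₀ (by linarith)]
      nlinarith [mul_nonneg (mul_nonneg hηpos.le (sq_nonneg ε))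
        (by linarith [ht₂ge, hεle] : (0:ℝ) ≤ 4*t₂ - 1)]
    rw [fcell_half]
    have hεsmall : (2 + 4*η) * ε ≤ 1 := by
      have h := (le_div_iff₀ h24).mp hεle2
      nlinarith [h]
    have : t₂ + ε^2/(2*t₂) + η * ε^2 / t₂ + Real.sqrt 2 * t₂ < 1/2 + Real.sqrt 2/2 := by
      have hst : Real.sqrt 2 * t₂ = Real.sqrt 2/2 - Real.sqrt 2 * ε := by
        rw [ht₂def]; ring
      rw [hst]
      nlinarith [mul_le_mul_of_nonneg_right hεsmall hεpos.le,
        mul_lt_mul_of_pos_right hs2 hεpos]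
    linarith
  -- compact minimum
  obtain ⟨t₀, ht₀mem, ht₀min⟩ :=
    (isCompact_Icc : IsCompact (Set.Icc (0:ℝ) (1/2))).exists_isMinOn
      ⟨0, by norm_num⟩ (fcell_cont η).continuousOn
  have hmin : ∀ s ∈ Set.Icc (0:ℝ) (1/2), fcell η t₀ ≤ fcell η s := fun s hs =>
    ht₀min hs
  have ht₁mem : t₁ ∈ Set.Icc (0:ℝ) (1/2) := ⟨ht₁pos.le, by linarith⟩
  have ht₂mem : t₂ ∈ Set.Icc (0:ℝ) (1/2) := ⟨ht₂pos.le, ht₂lt.le⟩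
  have hlt0 : fcell η t₀ < fcell η 0 := lt_of_le_of_lt (hmin t₁ ht₁mem) hw1
  have hlthalf : fcell η t₀ < fcell η (1/2) := lt_of_le_of_lt (hmin t₂ ht₂mem) hw2
  have ht₀ne0 : t₀ ≠ 0 := by rintro rfl; exact absurd hlt0 (lt_irrefl _)
  have ht₀nehalf : t₀ ≠ 1/2 := by rintro rfl; exact absurd hlthalf (lt_irrefl _)
  refine ⟨t₀, ⟨lt_of_le_of_ne ht₀mem.1 (Ne.symm ht₀ne0),
    lt_of_le_of_ne ht₀mem.2 ht₀nehalf⟩, ?_, hlt0⟩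
  intro s hs
  exact hmin s ⟨hs.1, hs.2.le⟩
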